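/- arXiv:2012.08590 — 2 statements merged into one kernel-verified Lean document; each statement's English description precedes it below -/
import Mathlib

section
/- The mixed metric dimension of the cycle graph Cₙ (n ≥ 3) equals 3. -/
namespace ThetaMixed

open SimpleGraph

variable {V : Type*}

/-- Distance from a vertex to an (unordered) pair of vertices:
`d(s, {x,y}) = min (d s x) (d s y)`. -/
noncomputable def edist (G : SimpleGraph V) (s : V) (e : Sym2 V) : ℕ :=
  Sym2.lift ⟨fun x y => min (G.dist s x) (G.dist s y), fun x y => min_comm _ _⟩ e

/-- Distance from a vertex to a mixed element (a vertex or an edge). -/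
noncomputable def mdist (G : SimpleGraph V) (s : V) : V ⊕ Sym2 V → ℕ :=
  Sum.elim (G.dist s) (edist G s)

/-- A mixed element of `G`: either a vertex, or an edge of `G`. -/
def IsMixedElem (G : SimpleGraph V) : V ⊕ Sym2 V → Prop :=
  Sum.elim (fun _ => True) (· ∈ G.edgeSet)

/-- `S` is a mixed metric generator of `G` if every pair of distinct mixed elements
(vertices or edges) is distinguished by some vertex of `S`. -/
def IsMixedGenerator (G : SimpleGraph V) (S : Set V) : Prop :=
  ∀ x x' : V ⊕ Sym2 V, IsMixedElem G x → IsMixedElem G x' → x ≠ x' →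
    ∃ s ∈ S, mdist G s x ≠ mdist G s x'

/-- The mixed metric dimension: the least cardinality of a mixed metric generator. -/
noncomputable def mdim (G : SimpleGraph V) [Fintype V] : ℕ :=
  sInf {n | ∃ S : Finset V, S.card = n ∧ IsMixedGenerator G ↑S}

/-- The number of leaves (vertices of degree 1). -/
noncomputable def numLeaves (G : SimpleGraph V) [Fintype V] : ℕ :=
  letI := Classical.dec
  letI : DecidableRel G.Adj := fun _ _ => Classical.dec _
  Fintype.card {v : V // G.degree v = 1}

/-- A Theta decomposition of `G`: two distinct vertices `u, v` joined by three
internally vertex-disjoint (and pairwise edge-disjoint) paths which together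
cover all vertices and edges of `G`. -/
structure IsThetaDecomp (G : SimpleGraph V) (u v : V)
    (P₁ P₂ P₃ : G.Walk u v) : Prop where
  ne : u ≠ v
  isPath₁ : P₁.IsPath
  isPath₂ : P₂.IsPath
  isPath₃ : P₃.IsPath
  intDisj₁₂ : ∀ w ∈ P₁.support, w ∈ P₂.support → w = u ∨ w = v
  intDisj₁₃ : ∀ w ∈ P₁.support, w ∈ P₃.support → w = u ∨ w = v
  intDisj₂₃ : ∀ w ∈ P₂.support, w ∈ P₃.support → w = u ∨ w = v
  edgeDisj₁₂ : ∀ e ∈ P₁.edges, e ∉ P₂.edges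
  edgeDisj₁₃ : ∀ e ∈ P₁.edges, e ∉ P₃.edges
  edgeDisj₂₃ : ∀ e ∈ P₂.edges, e ∉ P₃.edges
  coverV : ∀ w : V, w ∈ P₁.support ∨ w ∈ P₂.support ∨ w ∈ P₃.support
  coverE : ∀ e ∈ G.edgeSet, e ∈ P₁.edges ∨ e ∈ P₂.edges ∨ e ∈ P₃.edges

/-- `G` is a Theta graph. -/
def IsTheta (G : SimpleGraph V) : Prop :=
  ∃ (u v : V) (P₁ P₂ P₃ : G.Walk u v), IsThetaDecomp G u v P₁ P₂ P₃

/-- The three path lengths pairwise differ by at most 1. -/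
def Balanced3 (a b c : ℕ) : Prop :=
  Nat.dist a b ≤ 1 ∧ Nat.dist a c ≤ 1 ∧ Nat.dist b c ≤ 1

/-- `G` is a balanced Theta graph. -/
def IsBalancedTheta (G : SimpleGraph V) : Prop :=
  ∃ (u v : V) (P₁ P₂ P₃ : G.Walk u v), IsThetaDecomp G u v P₁ P₂ P₃ ∧
    Balanced3 P₁.length P₂.length P₃.length

/-- `G` is an unbalanced Theta graph. -/
def IsUnbalancedTheta (G : SimpleGraph V) : Prop :=
  IsTheta G ∧ ¬ IsBalancedTheta G

end ThetaMixed


namespace ThetaMixed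

open SimpleGraph

section
variable {m : ℕ}

set_option maxHeartbeats 1000000 in
theorem core_vv (n M k l : ℕ) (hn : 3 ≤ n) (hM : M = (n+1)/2)
    (hk : k < n) (hl : l < n)
    (h0 : min ((k-0)+(0-k)) (n - ((k-0)+(0-k))) = min ((l-0)+(0-l)) (n - ((l-0)+(0-l))))
    (h1 : min ((k-1)+(1-k)) (n - ((k-1)+(1-k))) = min ((l-1)+(1-l)) (n - ((l-1)+(1-l))))
    (h2 : min ((k-M)+(M-k)) (n - ((k-M)+(M-k))) = min ((l-M)+(M-l)) (n - ((l-M)+(M-l)))) :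
    k = l := by omega


set_option maxHeartbeats 4000000 in
theorem core_ee (n M k l t1k tMk t1l tMl : ℕ) (hn : 3 ≤ n) (hM : M = (n+1)/2)
    (hk : k < n) (hl : l < n)
    (ht1k : (1 ≤ k ∧ t1k = k - 1) ∨ (k < 1 ∧ t1k = k + n - 1))
    (htMk : (M ≤ k ∧ tMk = k - M) ∨ (k < M ∧ tMk = k + n - M))
    (ht1l : (1 ≤ l ∧ t1l = l - 1) ∨ (l < 1 ∧ t1l = l + n - 1))
    (htMl : (M ≤ l ∧ tMl = l - M) ∨ (l < M ∧ tMl = l + n - M))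
    (h0 : min k (n-1-k) = min l (n-1-l))
    (h1 : min t1k (n-1-t1k) = min t1l (n-1-t1l))
    (h2 : min tMk (n-1-tMk) = min tMl (n-1-tMl)) :
    k = l := by
  rcases ht1k with ⟨c1,rfl⟩|⟨c1,rfl⟩ <;> rcases htMk with ⟨c2,rfl⟩|⟨c2,rfl⟩ <;>
    rcases ht1l with ⟨c3,rfl⟩|⟨c3,rfl⟩ <;> rcases htMl with ⟨c4,rfl⟩|⟨c4,rfl⟩ <;> omega

set_option maxHeartbeats 4000000 in
theorem core_ve (n M k l t1l tMl : ℕ) (hn : 3 ≤ n) (hM : M = (n+1)/2)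
    (hk : k < n) (hl : l < n)
    (ht1l : (1 ≤ l ∧ t1l = l - 1) ∨ (l < 1 ∧ t1l = l + n - 1))
    (htMl : (M ≤ l ∧ tMl = l - M) ∨ (l < M ∧ tMl = l + n - M))
    (h0 : min ((k-0)+(0-k)) (n - ((k-0)+(0-k))) = min l (n-1-l))
    (h1 : min ((k-1)+(1-k)) (n - ((k-1)+(1-k))) = min t1l (n-1-t1l))
    (h2 : min ((k-M)+(M-k)) (n - ((k-M)+(M-k))) = min tMl (n-1-tMl)) :
    False := by
  rcases ht1l with ⟨c3,rfl⟩|⟨c3,rfl⟩ <;> rcases htMl with ⟨c4,rfl⟩|⟨c4,rfl⟩ <;> omega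

lemma sub_val (a b : Fin (m+3)) :
    (a - b).val = if b.val ≤ a.val then a.val - b.val else a.val + (m+3) - b.val := by
  have ha := a.isLt; have hb := b.isLt
  rw [Fin.sub_def]
  show ((m+3) - b.val + a.val) % (m+3) = _
  split_ifs with h
  · have he : (m+3) - b.val + a.val = (a.val - b.val) + (m+3) := by omega
    rw [he, Nat.add_mod_right, Nat.mod_eq_of_lt (by omega)]
  · rw [Nat.mod_eq_of_lt (by omega)]; omega

lemma add_val (a b : Fin (m+3)) :
    (a + b).val = if a.val + b.val < m+3 then a.val + b.val else a.val + b.val - (m+3) := by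
  have ha := a.isLt; have hb := b.isLt
  rw [Fin.add_def]
  show (a.val + b.val) % (m+3) = _
  split_ifs with h
  · exact Nat.mod_eq_of_lt h
  · rw [Nat.mod_eq_sub_mod (by omega), Nat.mod_eq_of_lt (by omega)]

lemma neg_val (a : Fin (m+3)) :
    (-a).val = if a.val = 0 then 0 else (m+3) - a.val := by
  have h := sub_val 0 a
  rw [zero_sub] at h
  rw [Fin.val_zero] at h
  rw [h]
  have := a.isLt
  split_ifs <;> omega

lemma cycle_adj {u v : Fin (m+3)} :
    (cycleGraph (m+3)).Adj u v ↔ v = u + 1 ∨ u = v + 1 := by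
  have h : (cycleGraph (m+3)).Adj u v ↔ u - v = 1 ∨ v - u = 1 := SimpleGraph.cycleGraph_adj
  rw [h, sub_eq_iff_eq_add', sub_eq_iff_eq_add', or_comm]

lemma cycle_dist_le : ∀ (a : ℕ) (u v : Fin (m+3)), (v - u).val = a →
    (cycleGraph (m+3)).dist u v ≤ a := by
  intro a
  induction a with
  | zero =>
    intro u v h
    have h0 : v - u = 0 := Fin.val_injective h
    have : v = u := by rwa [sub_eq_zero] at h0
    subst this
    simp [SimpleGraph.dist_self]
  | succ a ih =>
    intro u v h
    have v1 : ((1 : Fin (m+3))).val = 1 := Fin.val_one _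
    have hadj : (cycleGraph (m+3)).Adj u (u+1) := cycle_adj.mpr (Or.inl rfl)
    have hsub : (v - (u+1)).val = a := by
      have h1 : v - (u+1) = (v - u) - 1 := by abel
      rw [h1, sub_val, v1, h]
      split_ifs <;> omega
    have htri : (cycleGraph (m+3)).dist u v ≤
        (cycleGraph (m+3)).dist u (u+1) + (cycleGraph (m+3)).dist (u+1) v :=
      (SimpleGraph.cycleGraph_connected (n := m+2)).dist_triangle
    have h1 : (cycleGraph (m+3)).dist u (u+1) = 1 := SimpleGraph.dist_eq_one_iff_adj.mpr hadj
    have h2 := ih (u+1) v hsub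
    omega

lemma step_lemma (x y : Fin (m+3)) (h : y = x - 1 ∨ y = x + 1) :
    min x.val (-x).val ≤ min y.val (-y).val + 1 := by
  have hx := x.isLt
  have v1 : ((1 : Fin (m+3))).val = 1 := Fin.val_one _
  have hnx := neg_val x
  rcases h with rfl | rfl
  · have h1 := sub_val x 1
    have h2 := neg_val (x - 1)
    rw [v1] at h1
    split_ifs at h1 h2 hnx <;> omega
  · have h1 := add_val x 1
    have h2 := neg_val (x + 1)
    rw [v1] at h1
    split_ifs at h1 h2 hnx <;> omega

lemma min_le_length {u v : Fin (m+3)} (p : (cycleGraph (m+3)).Walk u v) :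
    min (v - u).val (u - v).val ≤ p.length := by
  induction p with
  | nil => simp
  | @cons a b c hadj q ih =>
    rw [SimpleGraph.Walk.length_cons]
    have h2 : a - c = -(c - a) := (neg_sub c a).symm
    have h3 : b - c = -(c - b) := (neg_sub c b).symm
    rcases cycle_adj.mp hadj with hb | hb
    · have he : c - b = (c - a) - 1 := by rw [hb]; abel
      have hs := step_lemma (c - a) (c - b) (Or.inl he)
      rw [h2]; rw [h3] at ih; omega
    · have he : c - b = (c - a) + 1 := by rw [hb]; abel
      have hs := step_lemma (c - a) (c - b) (Or.inr he)
      rw [h2]; rw [h3] at ih; omega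

lemma cycle_dist (u v : Fin (m+3)) :
    (cycleGraph (m+3)).dist u v = min (v - u).val (u - v).val := by
  apply le_antisymm
  · refine le_min (cycle_dist_le _ u v rfl) ?_
    rw [SimpleGraph.dist_comm]
    exact cycle_dist_le _ v u rfl
  · obtain ⟨p, hp⟩ := (SimpleGraph.cycleGraph_connected (n := m+2)).exists_walk_length_eq_dist u v
    rw [← hp]
    exact min_le_length p

lemma vdist_eq (s k : Fin (m+3)) :
    (cycleGraph (m+3)).dist s k =
      min ((k.val - s.val) + (s.val - k.val)) ((m+3) - ((k.val - s.val) + (s.val - k.val))) := by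
  rw [cycle_dist, sub_val, sub_val]
  have := s.isLt; have := k.isLt
  split_ifs <;> omega

lemma edist_mk (G : SimpleGraph V) (s a b : V) :
    ThetaMixed.edist G s s(a,b) = min (G.dist s a) (G.dist s b) := by
  rw [ThetaMixed.edist, Sym2.lift_mk]

lemma edge_dist_cases (s k : Fin (m+3)) :
    ∃ t : ℕ, ((s.val ≤ k.val ∧ t = k.val - s.val) ∨ (k.val < s.val ∧ t = k.val + (m+3) - s.val)) ∧
      ThetaMixed.edist (cycleGraph (m+3)) s s(k, k+1) = min t ((m+3) - 1 - t) := by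
  have hs := s.isLt; have hk := k.isLt
  have v1 : ((1 : Fin (m+3))).val = 1 := Fin.val_one _
  have hk1 : (k+1).val = if k.val + 1 < m+3 then k.val + 1 else 0 := by
    rw [add_val, v1]; split_ifs <;> omega
  rw [edist_mk, cycle_dist, cycle_dist, sub_val, sub_val, sub_val, sub_val, hk1]
  rcases le_or_gt s.val k.val with h | h
  · exact ⟨k.val - s.val, Or.inl ⟨h, rfl⟩, by split_ifs <;> omega⟩
  · exact ⟨k.val + (m+3) - s.val, Or.inr ⟨h, rfl⟩, by split_ifs <;> omega⟩

lemma edge_form {e : Sym2 (Fin (m+3))} (he : e ∈ (cycleGraph (m+3)).edgeSet) :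
    ∃ k, e = s(k, k+1) := by
  induction e using Sym2.ind with
  | _ a b =>
    rw [SimpleGraph.mem_edgeSet] at he
    rcases cycle_adj.mp he with h | h
    · exact ⟨a, by rw [h]⟩
    · exact ⟨b, by rw [h, Sym2.eq_swap]⟩

lemma edge_inj {k l : Fin (m+3)} (h : s(k, k+1) = s(l, l+1)) : k = l := by
  rw [Sym2.eq_iff] at h
  rcases h with ⟨h1, _⟩ | ⟨h1, h2⟩
  · exact h1
  · exfalso
    have hll : l + 1 + 1 = l := by rw [← h1, h2]
    have hv := congrArg Fin.val hll
    have v1 : ((1 : Fin (m+3))).val = 1 := Fin.val_one _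
    rw [add_val, add_val, v1] at hv
    have := l.isLt
    split_ifs at hv <;> omega

lemma pair_ne (s : Fin (m+3)) : s + 1 ≠ s - 1 := by
  intro h
  have v1 : ((1 : Fin (m+3))).val = 1 := Fin.val_one _
  have ha1 := add_val s 1
  have hs1 := sub_val s 1
  rw [v1] at ha1 hs1
  have h'' := congrArg Fin.val h
  have := s.isLt
  split_ifs at ha1 hs1 <;> omega

lemma vert_conf_self (s : Fin (m+3)) :
    (cycleGraph (m+3)).dist s (s+1) = (cycleGraph (m+3)).dist s (s-1) := by
  have v1 : ((1 : Fin (m+3))).val = 1 := Fin.val_one _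
  have ha1 := add_val s 1
  have hs1 := sub_val s 1
  rw [v1] at ha1 hs1
  rw [vdist_eq, vdist_eq]
  have := s.isLt
  split_ifs at ha1 hs1 <;> omega

lemma vert_conf_anti (s t : Fin (m+3)) (h : 2 * (t-s).val = m+3) :
    (cycleGraph (m+3)).dist t (s+1) = (cycleGraph (m+3)).dist t (s-1) := by
  have v1 : ((1 : Fin (m+3))).val = 1 := Fin.val_one _
  have ha1 := add_val s 1
  have hs1 := sub_val s 1
  have hc := sub_val t s
  rw [v1] at ha1 hs1
  rw [vdist_eq, vdist_eq]
  have := s.isLt; have := t.isLt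
  split_ifs at ha1 hs1 hc <;> omega

lemma edge_conf_self (t : Fin (m+3)) :
    (cycleGraph (m+3)).dist t t = ThetaMixed.edist (cycleGraph (m+3)) t s(t,t+1) := by
  obtain ⟨t0, ht0, he0⟩ := edge_dist_cases t t
  rw [he0, vdist_eq]
  have := t.isLt
  rcases ht0 with ⟨h0a, rfl⟩ | ⟨h0a, rfl⟩ <;> omega

lemma edge_conf_lt (s t : Fin (m+3)) (h2 : 2 * (t-s).val < m+3) :
    (cycleGraph (m+3)).dist s t = ThetaMixed.edist (cycleGraph (m+3)) s s(t,t+1) := by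
  obtain ⟨t0, ht0, he0⟩ := edge_dist_cases s t
  have hc := sub_val t s
  rw [he0, vdist_eq]
  have := s.isLt; have := t.isLt
  rcases ht0 with ⟨h0a, rfl⟩ | ⟨h0a, rfl⟩ <;> split_ifs at hc <;> omega

lemma edge_conf_gt (s t : Fin (m+3)) (h2 : 2 * (t-s).val > m+3) :
    (cycleGraph (m+3)).dist t s = ThetaMixed.edist (cycleGraph (m+3)) t s(s,s+1) := by
  obtain ⟨t0, ht0, he0⟩ := edge_dist_cases t s
  have hc := sub_val t s
  rw [he0, vdist_eq]
  have := s.isLt; have := t.isLt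
  rcases ht0 with ⟨h0a, rfl⟩ | ⟨h0a, rfl⟩ <;> split_ifs at hc <;> omega

def Mv (m : ℕ) : Fin (m+3) := ⟨(m+4)/2, by omega⟩

lemma card3 : ({0, 1, Mv m} : Finset (Fin (m+3))).card = 3 := by
  have v1 : ((1 : Fin (m+3))).val = 1 := Fin.val_one _
  have v0 : ((0 : Fin (m+3))).val = 0 := Fin.val_zero _
  have hM : (Mv m).val = (m+4)/2 := rfl
  have h01 : (0 : Fin (m+3)) ≠ 1 := fun h => by
    have h' := congrArg Fin.val h; rw [v0, v1] at h'; omega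
  have h0M : (0 : Fin (m+3)) ≠ Mv m := fun h => by
    have h' := congrArg Fin.val h; rw [v0, hM] at h'; omega
  have h1M : (1 : Fin (m+3)) ≠ Mv m := fun h => by
    have h' := congrArg Fin.val h; rw [v1, hM] at h'; omega
  rw [Finset.card_insert_of_notMem (by simp [h01, h0M]),
    Finset.card_insert_of_notMem (by simp [h1M]), Finset.card_singleton]

lemma gen3 : IsMixedGenerator (cycleGraph (m+3)) (↑({0, 1, Mv m} : Finset (Fin (m+3)))) := by
  have v1 : ((1 : Fin (m+3))).val = 1 := Fin.val_one _
  have v0 : ((0 : Fin (m+3))).val = 0 := Fin.val_zero _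
  have vM : (Mv m).val = (m+4)/2 := rfl
  intro x x' hx hx' hne
  by_contra hc
  push_neg at hc
  have e0 := hc 0 (by simp)
  have e1 := hc 1 (by simp)
  have eM := hc (Mv m) (by simp)
  clear hc
  cases x with
  | inl k =>
    cases x' with
    | inl l =>
      simp only [mdist, Sum.elim_inl] at e0 e1 eM
      rw [vdist_eq, vdist_eq] at e0 e1 eM
      rw [v0] at e0; rw [v1] at e1; rw [vM] at eM
      have hv := core_vv (m+3) ((m+4)/2) k.val l.val (by omega) (by omega)
        k.isLt l.isLt e0 e1 eM
      exact hne (congrArg Sum.inl (Fin.val_injective hv))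
    | inr e =>
      simp only [IsMixedElem, Sum.elim_inr] at hx'
      obtain ⟨l, rfl⟩ := edge_form hx'
      simp only [mdist, Sum.elim_inl, Sum.elim_inr] at e0 e1 eM
      obtain ⟨t0, ht0, he0⟩ := edge_dist_cases 0 l
      obtain ⟨t1, ht1, he1⟩ := edge_dist_cases 1 l
      obtain ⟨tM, htM, heM⟩ := edge_dist_cases (Mv m) l
      rw [he0, vdist_eq] at e0
      rw [he1, vdist_eq] at e1
      rw [heM, vdist_eq] at eM
      rw [v0] at e0 ht0; rw [v1] at e1 ht1; rw [vM] at eM htM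
      have ht0' : t0 = l.val := by rcases ht0 with ⟨_, h⟩ | ⟨h, _⟩ <;> omega
      rw [ht0'] at e0
      exact core_ve (m+3) ((m+4)/2) k.val l.val t1 tM (by omega) (by omega)
        k.isLt l.isLt ht1 htM e0 e1 eM
  | inr e =>
    cases x' with
    | inl l =>
      simp only [IsMixedElem, Sum.elim_inr] at hx
      obtain ⟨k, rfl⟩ := edge_form hx
      simp only [mdist, Sum.elim_inl, Sum.elim_inr] at e0 e1 eM
      obtain ⟨t0, ht0, he0⟩ := edge_dist_cases 0 k
      obtain ⟨t1, ht1, he1⟩ := edge_dist_cases 1 k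
      obtain ⟨tM, htM, heM⟩ := edge_dist_cases (Mv m) k
      rw [he0, vdist_eq] at e0
      rw [he1, vdist_eq] at e1
      rw [heM, vdist_eq] at eM
      rw [v0] at e0 ht0; rw [v1] at e1 ht1; rw [vM] at eM htM
      have ht0' : t0 = k.val := by rcases ht0 with ⟨_, h⟩ | ⟨h, _⟩ <;> omega
      rw [ht0'] at e0
      exact core_ve (m+3) ((m+4)/2) l.val k.val t1 tM (by omega) (by omega)
        l.isLt k.isLt ht1 htM e0.symm e1.symm eM.symm
    | inr e' =>
      simp only [IsMixedElem, Sum.elim_inr] at hx hx'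
      obtain ⟨k, rfl⟩ := edge_form hx
      obtain ⟨l, rfl⟩ := edge_form hx'
      simp only [mdist, Sum.elim_inr] at e0 e1 eM
      obtain ⟨a0, ha0, hf0⟩ := edge_dist_cases 0 k
      obtain ⟨a1, ha1, hf1⟩ := edge_dist_cases 1 k
      obtain ⟨aM, haM, hfM⟩ := edge_dist_cases (Mv m) k
      obtain ⟨b0, hb0, hg0⟩ := edge_dist_cases 0 l
      obtain ⟨b1, hb1, hg1⟩ := edge_dist_cases 1 l
      obtain ⟨bM, hbM, hgM⟩ := edge_dist_cases (Mv m) l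
      rw [hf0, hg0] at e0; rw [hf1, hg1] at e1; rw [hfM, hgM] at eM
      rw [v0] at ha0 hb0; rw [v1] at ha1 hb1; rw [vM] at haM hbM
      have ha0' : a0 = k.val := by rcases ha0 with ⟨_, h⟩ | ⟨h, _⟩ <;> omega
      have hb0' : b0 = l.val := by rcases hb0 with ⟨_, h⟩ | ⟨h, _⟩ <;> omega
      rw [ha0', hb0'] at e0
      have hv := core_ee (m+3) ((m+4)/2) k.val l.val a1 aM b1 bM (by omega) (by omega)
        k.isLt l.isLt ha1 haM hb1 hbM e0 e1 eM
      exact hne (congrArg Sum.inr (by rw [Fin.val_injective hv]))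

lemma lower (S : Finset (Fin (m+3))) (hS : IsMixedGenerator (cycleGraph (m+3)) ↑S) :
    3 ≤ S.card := by
  by_contra hcard
  push_neg at hcard
  obtain ⟨s, t, hsub⟩ : ∃ s t : Fin (m+3), (↑S : Set (Fin (m+3))) ⊆ {s, t} := by
    rcases S.eq_empty_or_nonempty with rfl | ⟨a, ha⟩
    · exact ⟨0, 0, by simp⟩
    rcases (S.erase a).eq_empty_or_nonempty with he | ⟨b, hb⟩
    · refine ⟨a, a, fun x hx => ?_⟩
      have hxa : x = a := by
        by_contra hxa
        have hmem : x ∈ S.erase a := Finset.mem_erase.mpr ⟨hxa, hx⟩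
        rw [he] at hmem
        exact absurd hmem (Finset.notMem_empty x)
      simp [hxa]
    · refine ⟨a, b, fun x hx => ?_⟩
      by_contra hxab
      simp only [Set.mem_insert_iff, Set.mem_singleton_iff] at hxab
      push_neg at hxab
      obtain ⟨hba, hbS⟩ := Finset.mem_erase.mp hb
      have hxS : x ∈ S := hx
      have hsub3 : ({x, a, b} : Finset (Fin (m+3))) ⊆ S := by
        intro y hy
        rcases Finset.mem_insert.mp hy with rfl | hy
        · exact hxS
        rcases Finset.mem_insert.mp hy with rfl | hy
        · exact ha
        rw [Finset.mem_singleton.mp hy]; exact hbS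
      have hc3 : ({x, a, b} : Finset (Fin (m+3))).card = 3 := by
        rw [Finset.card_insert_of_notMem (by simp [hxab.1, hxab.2]),
          Finset.card_insert_of_notMem (by simp [hba.symm]), Finset.card_singleton]
      have hle := Finset.card_le_card hsub3
      omega
  have finish : ∀ (x x' : Fin (m+3) ⊕ Sym2 (Fin (m+3))),
      IsMixedElem (cycleGraph (m+3)) x → IsMixedElem (cycleGraph (m+3)) x' → x ≠ x' →
      mdist (cycleGraph (m+3)) s x = mdist (cycleGraph (m+3)) s x' →
      mdist (cycleGraph (m+3)) t x = mdist (cycleGraph (m+3)) t x' → False := by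
    intro x x' h1 h2 h3 h4 h5
    obtain ⟨u, huS, hune⟩ := hS x x' h1 h2 h3
    have hu2 := hsub huS
    simp only [Set.mem_insert_iff, Set.mem_singleton_iff] at hu2
    rcases hu2 with rfl | rfl
    · exact hune h4
    · exact hune h5
  rcases Nat.lt_trichotomy (2 * (t - s).val) (m+3) with hlt | heq | hgt
  · rcases Nat.eq_zero_or_pos (t - s).val with hc0 | hpos
    · have hts : t = s := by
        have h0 : t - s = 0 := Fin.val_injective (by rw [hc0]; rfl)
        rwa [sub_eq_zero] at h0
      subst hts
      refine finish (Sum.inl (t+1)) (Sum.inl (t-1)) trivial trivial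
        (fun h => by injection h with h'; exact pair_ne t h') ?_ ?_ <;>
        · simp only [mdist, Sum.elim_inl]
          exact vert_conf_self t
    · have hadj : s(t, t+1) ∈ (cycleGraph (m+3)).edgeSet :=
        (SimpleGraph.mem_edgeSet _).mpr (cycle_adj.mpr (Or.inl rfl))
      refine finish (Sum.inl t) (Sum.inr s(t, t+1)) trivial hadj (by simp) ?_ ?_
      · simp only [mdist, Sum.elim_inl, Sum.elim_inr]
        exact edge_conf_lt s t hlt
      · simp only [mdist, Sum.elim_inl, Sum.elim_inr]
        exact edge_conf_self t
  · refine finish (Sum.inl (s+1)) (Sum.inl (s-1)) trivial trivial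
      (fun h => by injection h with h'; exact pair_ne s h') ?_ ?_
    · simp only [mdist, Sum.elim_inl]
      exact vert_conf_self s
    · simp only [mdist, Sum.elim_inl]
      exact vert_conf_anti s t heq
  · have hadj : s(s, s+1) ∈ (cycleGraph (m+3)).edgeSet :=
      (SimpleGraph.mem_edgeSet _).mpr (cycle_adj.mpr (Or.inl rfl))
    refine finish (Sum.inl s) (Sum.inr s(s, s+1)) trivial hadj (by simp) ?_ ?_
    · simp only [mdist, Sum.elim_inl, Sum.elim_inr]
      exact edge_conf_self s
    · simp only [mdist, Sum.elim_inl, Sum.elim_inr]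
      exact edge_conf_gt s t hgt

end

/-- The mixed metric dimension of the cycle graph `Cₙ` (`n ≥ 3`) equals 3. -/
theorem mdim_cycleGraph (n : ℕ) (hn : 3 ≤ n) :
    mdim (SimpleGraph.cycleGraph n) = 3 := by
  obtain ⟨m, rfl⟩ : ∃ m, n = m + 3 := ⟨n - 3, by omega⟩
  have hmem : 3 ∈ {j | ∃ S : Finset (Fin (m+3)), S.card = j ∧
      IsMixedGenerator (cycleGraph (m+3)) ↑S} := ⟨{0, 1, Mv m}, card3, gen3⟩
  unfold mdim
  refine le_antisymm (Nat.sInf_le hmem) (le_csInf ⟨3, hmem⟩ ?_)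
  rintro j ⟨S, rfl, hg⟩
  exact lower S hg

end ThetaMixed
end

section
/- Let G be a Theta graph with degree-3 vertices u and v, and let S ⊆ V(G) contain both u and v but no internal vertex of two of the three u–v paths P_i and P_j. If |P_i| = |P_j|, then the neighbors of u on P_i and P_j are not distinguished by S; if |P_i| = |P_j| − 1, then the vertex u and the edge from u to its neighbor on P_j are not distinguished by S. In particular, if G is balanced, such an S is not a mixed metric generator. -/
namespace ThetaMixed

open SimpleGraph

section Aux

variable {V : Type*} {G : SimpleGraph V} {u v : V}

private lemma getVert_injOn' {a b : V} {p : G.Walk a b} (hp : p.IsPath) :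
    ∀ i, i ≤ p.length → ∀ j, j ≤ p.length → p.getVert i = p.getVert j → i = j := by
  induction p with
  | nil => intro i hi j hj _; simp only [Walk.length_nil, Nat.le_zero] at hi hj; omega
  | cons h q ih =>
    rw [Walk.cons_isPath_iff] at hp
    intro i hi j hj hij
    simp only [Walk.length_cons] at hi hj
    match i, j with
    | 0, 0 => rfl
    | 0, j+1 =>
      rw [Walk.getVert_zero, Walk.getVert_cons_succ] at hij
      exact absurd (Walk.mem_support_iff_exists_getVert.mpr ⟨j, hij.symm, by omega⟩) hp.2
    | i+1, 0 =>
      rw [Walk.getVert_zero, Walk.getVert_cons_succ] at hij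
      exact absurd (Walk.mem_support_iff_exists_getVert.mpr ⟨i, hij, by omega⟩) hp.2
    | i+1, j+1 =>
      rw [Walk.getVert_cons_succ, Walk.getVert_cons_succ] at hij
      have := ih hp.1 i (by omega) j (by omega) hij
      omega

private lemma mem_edges_iff_getVert {a b : V} {p : G.Walk a b} {e : Sym2 V} :
    e ∈ p.edges ↔ ∃ i, i < p.length ∧ e = s(p.getVert i, p.getVert (i+1)) := by
  induction p with
  | nil => simp
  | cons h q ih =>
    simp only [Walk.edges_cons, List.mem_cons, ih, Walk.length_cons]
    constructor
    · rintro (rfl | ⟨i, hi, rfl⟩)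
      · exact ⟨0, by omega, by simp [Walk.getVert_cons_succ, Walk.getVert_zero]⟩
      · exact ⟨i+1, by omega, by simp [Walk.getVert_cons_succ]⟩
    · rintro ⟨i, hi, rfl⟩
      match i with
      | 0 => left; simp [Walk.getVert_cons_succ, Walk.getVert_zero]
      | i+1 => right; exact ⟨i, by omega, by simp [Walk.getVert_cons_succ]⟩

variable {P₁ P₂ P₃ : G.Walk u v}

lemma IsThetaDecomp.swap12 (hT : IsThetaDecomp G u v P₁ P₂ P₃) :
    IsThetaDecomp G u v P₂ P₁ P₃ where
  ne := hT.ne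
  isPath₁ := hT.isPath₂
  isPath₂ := hT.isPath₁
  isPath₃ := hT.isPath₃
  intDisj₁₂ := fun w h1 h2 => hT.intDisj₁₂ w h2 h1
  intDisj₁₃ := hT.intDisj₂₃
  intDisj₂₃ := hT.intDisj₁₃
  edgeDisj₁₂ := fun e h1 h2 => hT.edgeDisj₁₂ e h2 h1
  edgeDisj₁₃ := hT.edgeDisj₂₃
  edgeDisj₂₃ := hT.edgeDisj₁₃
  coverV := fun w => by rcases hT.coverV w with h|h|h <;> tauto
  coverE := fun e he => by rcases hT.coverE e he with h|h|h <;> tauto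

lemma IsThetaDecomp.connected (hT : IsThetaDecomp G u v P₁ P₂ P₃) :
    G.Connected := by
  classical
  have hr : ∀ a : V, G.Reachable u a := by
    intro a
    rcases hT.coverV a with h|h|h
    · exact ⟨P₁.takeUntil a h⟩
    · exact ⟨P₂.takeUntil a h⟩
    · exact ⟨P₃.takeUntil a h⟩
  exact (connected_iff_exists_forall_reachable (G := G)).mpr ⟨u, hr⟩

lemma IsThetaDecomp.adj_mem_edges₂ (hT : IsThetaDecomp G u v P₁ P₂ P₃)
    {x y : V} (hxy : G.Adj x y) (hx : x ∈ P₂.support) (hxu : x ≠ u) (hxv : x ≠ v) :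
    s(x, y) ∈ P₂.edges := by
  rcases hT.coverE s(x,y) (G.mem_edgeSet.mpr hxy) with h|h|h
  · rcases hT.intDisj₁₂ x (P₁.fst_mem_support_of_mem_edges h) hx with rfl|rfl
    · exact absurd rfl hxu
    · exact absurd rfl hxv
  · exact h
  · rcases hT.intDisj₂₃ x hx (P₃.fst_mem_support_of_mem_edges h) with rfl|rfl
    · exact absurd rfl hxu
    · exact absurd rfl hxv

-- A potential function used to lower-bound distances to `P.getVert 1`.
open Classical in
noncomputable def fpot (G : SimpleGraph V) (u v : V) (P : G.Walk u v) (x : V) : ℕ :=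
  if h : ∃ k, 1 ≤ k ∧ k < P.length ∧ P.getVert k = x then
    min (h.choose - 1) ((P.length - h.choose) + min (G.dist v u + 1) (P.length - 1))
  else min (G.dist x u + 1) (G.dist x v + (P.length - 1))

lemma fpot_interior {P : G.Walk u v} (hp : P.IsPath) {k : ℕ} (h1 : 1 ≤ k) (h2 : k < P.length) :
    fpot G u v P (P.getVert k) =
      min (k - 1) ((P.length - k) + min (G.dist v u + 1) (P.length - 1)) := by
  have hex : ∃ k', 1 ≤ k' ∧ k' < P.length ∧ P.getVert k' = P.getVert k := ⟨k, h1, h2, rfl⟩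
  rw [fpot, dif_pos hex]
  obtain ⟨h1', h2', h3'⟩ := hex.choose_spec
  rw [getVert_injOn' hp _ (le_of_lt h2') _ (le_of_lt h2) h3']

lemma fpot_ext {P : G.Walk u v} {x : V}
    (hx : ¬ ∃ k, 1 ≤ k ∧ k < P.length ∧ P.getVert k = x) :
    fpot G u v P x = min (G.dist x u + 1) (G.dist x v + (P.length - 1)) := dif_neg hx

lemma not_interior {P : G.Walk u v} (hp : P.IsPath) {x : V}
    (hx : x ∈ P.support → x = u ∨ x = v) :
    ¬ ∃ k, 1 ≤ k ∧ k < P.length ∧ P.getVert k = x := by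
  rintro ⟨k, h1, h2, rfl⟩
  have hsup : P.getVert k ∈ P.support :=
    Walk.mem_support_iff_exists_getVert.mpr ⟨k, rfl, le_of_lt h2⟩
  rcases hx hsup with h|h
  · have : k = 0 := getVert_injOn' hp k h2.le 0 (Nat.zero_le _)
      (by rw [h, Walk.getVert_zero])
    omega
  · have : k = P.length := getVert_injOn' hp k h2.le P.length le_rfl
      (by rw [h, Walk.getVert_length])
    omega

lemma fpot_lip (hT : IsThetaDecomp G u v P₁ P₂ P₃) (hL : 2 ≤ P₂.length)
    {x y : V} (hxy : G.Adj x y) : fpot G u v P₂ x ≤ fpot G u v P₂ y + 1 := by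
  have hconn := hT.connected
  have hp := hT.isPath₂
  have hinj := getVert_injOn' (p := P₂) hp
  by_cases hx : ∃ k, 1 ≤ k ∧ k < P₂.length ∧ P₂.getVert k = x
  · obtain ⟨k, hk1, hk2, rfl⟩ := hx
    have hxu : P₂.getVert k ≠ u := fun h => by
      have := hinj k hk2.le 0 (Nat.zero_le _) (by rw [h, Walk.getVert_zero]); omega
    have hxv : P₂.getVert k ≠ v := fun h => by
      have := hinj k hk2.le P₂.length le_rfl (by rw [h, Walk.getVert_length]); omega
    have hsup : P₂.getVert k ∈ P₂.support :=
      Walk.mem_support_iff_exists_getVert.mpr ⟨k, rfl, hk2.le⟩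
    obtain ⟨i, hi, hie⟩ := mem_edges_iff_getVert.mp (hT.adj_mem_edges₂ hxy hsup hxu hxv)
    rw [Sym2.eq_iff] at hie
    rcases hie with ⟨hki, hy⟩ | ⟨hki, hy⟩
    · have hk_eq : k = i := hinj k hk2.le i hi.le hki
      subst hk_eq
      subst hy
      by_cases hkl : k + 1 < P₂.length
      · rw [fpot_interior hp hk1 hk2, fpot_interior hp (by omega) hkl]
        simp only [Nat.min_def]; split_ifs <;> omega
      · have hv : P₂.getVert (k+1) = v := by
          have : k + 1 = P₂.length := by omega
          rw [this, Walk.getVert_length]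
        rw [fpot_interior hp hk1 hk2, hv,
          fpot_ext (not_interior hp (fun _ => Or.inr rfl)), SimpleGraph.dist_self]
        simp only [Nat.min_def]; split_ifs <;> omega
    · have hk_eq : k = i + 1 := hinj k hk2.le (i+1) hi hki
      subst hk_eq
      subst hy
      by_cases hi1 : 1 ≤ i
      · rw [fpot_interior hp hk1 hk2, fpot_interior hp hi1 (by omega)]
        simp only [Nat.min_def]; split_ifs <;> omega
      · have hi0 : i = 0 := by omega
        subst hi0
        rw [fpot_interior hp hk1 hk2, Walk.getVert_zero,
          fpot_ext (not_interior hp (fun _ => Or.inl rfl))]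
        simp only [Nat.min_def]; split_ifs <;> omega
  · by_cases hy' : ∃ k, 1 ≤ k ∧ k < P₂.length ∧ P₂.getVert k = y
    · obtain ⟨k, hk1, hk2, rfl⟩ := hy'
      have hyu : P₂.getVert k ≠ u := fun h => by
        have := hinj k hk2.le 0 (Nat.zero_le _) (by rw [h, Walk.getVert_zero]); omega
      have hyv : P₂.getVert k ≠ v := fun h => by
        have := hinj k hk2.le P₂.length le_rfl (by rw [h, Walk.getVert_length]); omega
      have hsup : P₂.getVert k ∈ P₂.support :=
        Walk.mem_support_iff_exists_getVert.mpr ⟨k, rfl, hk2.le⟩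
      obtain ⟨i, hi, hie⟩ := mem_edges_iff_getVert.mp (hT.adj_mem_edges₂ hxy.symm hsup hyu hyv)
      rw [Sym2.eq_iff] at hie
      rcases hie with ⟨hki, hx2⟩ | ⟨hki, hx2⟩
      · have hk_eq : k = i := hinj k hk2.le i hi.le hki
        subst hk_eq
        have hkL : k + 1 = P₂.length := by
          by_contra hcon
          exact hx ⟨k+1, by omega, by omega, hx2.symm⟩
        have hxv2 : x = v := by rw [hx2, hkL, Walk.getVert_length]
        subst hxv2
        rw [fpot_ext hx, fpot_interior hp hk1 hk2, SimpleGraph.dist_self]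
        simp only [Nat.min_def]; split_ifs <;> omega
      · have hk_eq : k = i + 1 := hinj k hk2.le (i+1) hi hki
        subst hk_eq
        have hi0 : i = 0 := by
          by_contra hcon
          exact hx ⟨i, by omega, by omega, hx2.symm⟩
        subst hi0
        have hxu2 : x = u := by rw [hx2, Walk.getVert_zero]
        subst hxu2
        rw [fpot_ext hx, fpot_interior hp hk1 hk2, SimpleGraph.dist_self]
        simp only [Nat.min_def]; split_ifs <;> omega
    · rw [fpot_ext hx, fpot_ext hy']
      have hd1 : G.dist x y = 1 := SimpleGraph.dist_eq_one_iff_adj.mpr hxy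
      have t1 : G.dist x u ≤ G.dist x y + G.dist y u := hconn.dist_triangle
      have t2 : G.dist x v ≤ G.dist x y + G.dist y v := hconn.dist_triangle
      simp only [Nat.min_def]; split_ifs <;> omega

lemma fpot_le_walk (hT : IsThetaDecomp G u v P₁ P₂ P₃) (hL : 2 ≤ P₂.length)
    {x y : V} (w : G.Walk x y) : fpot G u v P₂ x ≤ w.length + fpot G u v P₂ y := by
  induction w with
  | nil => simp
  | cons h q ih =>
    have := fpot_lip hT hL h
    simp only [Walk.length_cons]
    omega

lemma dist_getVert_one (hT : IsThetaDecomp G u v P₁ P₂ P₃) (hL : 2 ≤ P₂.length)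
    {s : V} (hs : s ∈ P₂.support → s = u ∨ s = v) :
    G.dist s (P₂.getVert 1) =
      min (G.dist s u + 1) (G.dist s v + (P₂.length - 1)) := by
  have hconn := hT.connected
  have hp := hT.isPath₂
  have hua : G.Adj u (P₂.getVert 1) := by
    have := P₂.adj_getVert_succ (i := 0) (by omega)
    simpa using this
  have hdua : G.dist u (P₂.getVert 1) = 1 := SimpleGraph.dist_eq_one_iff_adj.mpr hua
  have hnil : ¬ P₂.Nil := by rw [Walk.not_nil_iff_lt_length]; omega
  have hdva : G.dist v (P₂.getVert 1) ≤ P₂.length - 1 := by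
    have h1 := SimpleGraph.dist_le (P₂.tail.reverse)
    rw [Walk.length_reverse] at h1
    have h2 := Walk.length_tail_add_one hnil
    change G.dist v (P₂.getVert 1) ≤ P₂.tail.length at h1
    omega
  apply le_antisymm
  · refine le_min ?_ ?_
    · calc G.dist s (P₂.getVert 1) ≤ G.dist s u + G.dist u (P₂.getVert 1) :=
            hconn.dist_triangle
        _ = G.dist s u + 1 := by rw [hdua]
    · calc G.dist s (P₂.getVert 1) ≤ G.dist s v + G.dist v (P₂.getVert 1) :=
            hconn.dist_triangle
        _ ≤ _ := by omega
  · obtain ⟨w, hw⟩ := (hconn s (P₂.getVert 1)).exists_walk_length_eq_dist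
    have hfa : fpot G u v P₂ (P₂.getVert 1) = 0 := by
      rw [fpot_interior hp le_rfl (by omega)]; simp
    have hfs : fpot G u v P₂ s = min (G.dist s u + 1) (G.dist s v + (P₂.length - 1)) :=
      fpot_ext (not_interior hp hs)
    have hb := fpot_le_walk hT hL w
    rw [hfa, hw, hfs] at hb
    omega

lemma partA (hT : IsThetaDecomp G u v P₁ P₂ P₃) (hlen : P₁.length = P₂.length)
    {s : V} (hs1 : s ∈ P₁.support → s = u ∨ s = v) (hs2 : s ∈ P₂.support → s = u ∨ s = v) :
    G.dist s (P₁.getVert 1) = G.dist s (P₂.getVert 1) := by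
  by_cases hL : 2 ≤ P₂.length
  · rw [dist_getVert_one hT.swap12 (by omega) hs1, dist_getVert_one hT hL hs2, hlen]
  · rw [Walk.getVert_of_length_le P₁ (by omega), Walk.getVert_of_length_le P₂ (by omega)]

lemma partB (hT : IsThetaDecomp G u v P₁ P₂ P₃) (hlen : P₁.length + 1 = P₂.length)
    {s : V} (hs2 : s ∈ P₂.support → s = u ∨ s = v) :
    G.dist s u = edist G s s(u, P₂.getVert 1) := by
  have hL1 : 1 ≤ P₁.length := by
    by_contra h
    exact hT.ne (Walk.eq_of_length_eq_zero (p := P₁) (by omega))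
  have hform := dist_getVert_one hT (by omega) hs2
  have hduv : G.dist v u ≤ P₁.length := by
    have := SimpleGraph.dist_le P₁.reverse
    rwa [Walk.length_reverse] at this
  have htri : G.dist s u ≤ G.dist s v + G.dist v u := hT.connected.dist_triangle
  have hed : edist G s s(u, P₂.getVert 1) =
      min (G.dist s u) (G.dist s (P₂.getVert 1)) := by
    simp only [edist, Sym2.lift_mk]
  rw [hed, hform]
  simp only [Nat.min_def]; split_ifs <;> omega

lemma one_le_length (hT : IsThetaDecomp G u v P₁ P₂ P₃) :
    1 ≤ P₁.length ∧ 1 ≤ P₂.length := by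
  constructor
  · by_contra h
    exact hT.ne (Walk.eq_of_length_eq_zero (p := P₁) (by omega))
  · by_contra h
    exact hT.ne (Walk.eq_of_length_eq_zero (p := P₂) (by omega))

lemma edge_uv_mem {P : G.Walk u v} (hP : P.length = 1) : s(u, v) ∈ P.edges := by
  rw [mem_edges_iff_getVert]
  refine ⟨0, by omega, ?_⟩
  rw [Walk.getVert_zero]
  have : P.getVert 1 = v := Walk.getVert_of_length_le P (by omega)
  rw [this]

end Aux

/-- In a Theta graph, if `S` contains `u` and `v` but no internal vertex of two of
the three paths, say `P₁` and `P₂`, then: if `|P₁| = |P₂|`, the neighbors of `u`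
on `P₁` and `P₂` are not distinguished by `S`; if `|P₁| = |P₂| − 1`, the vertex `u`
and the edge from `u` to its neighbor on `P₂` are not distinguished by `S`.
In particular, if `G` is balanced, `S` is not a mixed metric generator. -/
theorem theta_uv_generator_fails {V : Type*} (G : SimpleGraph V)
    (u v : V) (P₁ P₂ P₃ : G.Walk u v) (hT : IsThetaDecomp G u v P₁ P₂ P₃)
    (S : Set V) (huS : u ∈ S) (hvS : v ∈ S)
    (h1 : ∀ s ∈ S, s ∈ P₁.support → s = u ∨ s = v)
    (h2 : ∀ s ∈ S, s ∈ P₂.support → s = u ∨ s = v) :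
    (P₁.length = P₂.length →
      ∀ s ∈ S, G.dist s (P₁.getVert 1) = G.dist s (P₂.getVert 1)) ∧
    (P₁.length + 1 = P₂.length →
      ∀ s ∈ S, G.dist s u = edist G s s(u, P₂.getVert 1)) ∧
    (Balanced3 P₁.length P₂.length P₃.length → ¬ IsMixedGenerator G S) := by
  have A : P₁.length = P₂.length →
      ∀ s ∈ S, G.dist s (P₁.getVert 1) = G.dist s (P₂.getVert 1) := by
    intro hlen s hsS
    exact partA hT hlen (h1 s hsS) (h2 s hsS)
  have B : P₁.length + 1 = P₂.length →
      ∀ s ∈ S, G.dist s u = edist G s s(u, P₂.getVert 1) := by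
    intro hlen s hsS
    exact partB hT hlen (h2 s hsS)
  refine ⟨A, B, ?_⟩
  intro hbal hgen
  have hd12 : P₁.length - P₂.length + (P₂.length - P₁.length) ≤ 1 := by
    have := hbal.1
    simpa [Nat.dist] using this
  have hl := one_le_length hT
  by_cases h12 : P₁.length = P₂.length
  · have hL2 : 2 ≤ P₂.length := by
      by_contra hcon
      have e1 : s(u,v) ∈ P₁.edges := edge_uv_mem (by omega)
      have e2 : s(u,v) ∈ P₂.edges := edge_uv_mem (by omega)
      exact hT.edgeDisj₁₂ _ e1 e2
    have hinj1 := getVert_injOn' hT.isPath₁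
    have hne : P₁.getVert 1 ≠ P₂.getVert 1 := by
      intro h
      have hsup2 : P₁.getVert 1 ∈ P₂.support := by
        rw [h]; exact Walk.mem_support_iff_exists_getVert.mpr ⟨1, rfl, by omega⟩
      have hsup1 : P₁.getVert 1 ∈ P₁.support :=
        Walk.mem_support_iff_exists_getVert.mpr ⟨1, rfl, by omega⟩
      rcases hT.intDisj₁₂ _ hsup1 hsup2 with h'|h'
      · have := hinj1 1 (by omega) 0 (by omega) (by rw [h', Walk.getVert_zero])
        omega
      · have := hinj1 1 (by omega) P₁.length (le_refl _) (by rw [h', Walk.getVert_length])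
        omega
    obtain ⟨s, hsS, hsne⟩ := hgen (Sum.inl (P₁.getVert 1)) (Sum.inl (P₂.getVert 1))
      trivial trivial (by simpa using hne)
    exact hsne (A h12 s hsS)
  · by_cases h12' : P₁.length + 1 = P₂.length
    · have hE : s(u, P₂.getVert 1) ∈ G.edgeSet := by
        apply Walk.edges_subset_edgeSet P₂
        rw [mem_edges_iff_getVert]
        exact ⟨0, by omega, by rw [Walk.getVert_zero]⟩
      obtain ⟨s, hsS, hsne⟩ := hgen (Sum.inl u) (Sum.inr s(u, P₂.getVert 1))
        trivial hE (by simp)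
      exact hsne (B h12' s hsS)
    · have h21 : P₂.length + 1 = P₁.length := by omega
      have B' : ∀ s ∈ S, G.dist s u = edist G s s(u, P₁.getVert 1) := by
        intro s hsS
        exact partB hT.swap12 h21 (h1 s hsS)
      have hE : s(u, P₁.getVert 1) ∈ G.edgeSet := by
        apply Walk.edges_subset_edgeSet P₁
        rw [mem_edges_iff_getVert]
        exact ⟨0, by omega, by rw [Walk.getVert_zero]⟩
      obtain ⟨s, hsS, hsne⟩ := hgen (Sum.inl u) (Sum.inr s(u, P₁.getVert 1))
        trivial hE (by simp)
      exact hsne (B' s hsS)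


end ThetaMixed
end
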